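/- Let m be a positive even integer and n a positive odd integer with gcd(m,n) = 1. The number of group homomorphisms from D_m into D_n is 3n + 1. -/

import Mathlib

/-!
A homomorphism `D_m → G` is determined by the images `a` of `r 1` and `b` of `sr 0`, and any pair
with `a ^ m = 1`, `b ^ 2 = 1`, `b a b = a⁻¹` occurs. In `D_n` the order of an element divides `2n`,
so when `gcd(m, n) = 1` and `m` is even, `a ^ m = 1` is equivalent to `a ^ 2 = 1`; for two elements
of order at most `2` the relation `b a b = a⁻¹` says that they commute. For odd `n` the commuting
pairs of such elements are `(1, 1)`, `(1, sr j)`, `(sr i, 1)` and `(sr i, sr i)`: `3n + 1` of them.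
-/

section Group

variable {G : Type*} [Group G]

lemma mul_pow_mul_eq_inv {a b : G} (hb : b ^ 2 = 1) (hbab : b * a * b = a⁻¹) (k : ℕ) :
    b * a ^ k * b = (a ^ k)⁻¹ := by
  have hb' : b⁻¹ = b := inv_eq_of_mul_eq_one_right (by rw [← sq, hb])
  calc b * a ^ k * b = (b * a * b⁻¹) ^ k := by rw [conj_pow, hb']
    _ = (a ^ k)⁻¹ := by rw [hb', hbab, inv_pow]

lemma mul_mul_eq_inv_iff_commute {a b : G} (ha : a ^ 2 = 1) (hb : b ^ 2 = 1) :
    b * a * b = a⁻¹ ↔ Commute a b := by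
  rw [inv_eq_of_mul_eq_one_right (by rw [← sq, ha]), commute_iff_eq, eq_comm (a := a * b),
    ← mul_left_inj b, mul_assoc _ b b, ← sq, hb, mul_one]

namespace ZMod

variable {m : ℕ} [NeZero m] {a : G}

lemma pow_val_add (ha : a ^ m = 1) (i j : ZMod m) :
    a ^ (i + j).val = a ^ i.val * a ^ j.val := by
  rw [ZMod.val_add, ← pow_eq_pow_mod _ ha, pow_add]

lemma pow_val_neg (ha : a ^ m = 1) (i : ZMod m) : a ^ (-i).val = (a ^ i.val)⁻¹ :=
  eq_inv_of_mul_eq_one_right <| by rw [← pow_val_add ha, add_neg_cancel, val_zero, pow_zero]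

end ZMod

end Group

namespace DihedralGroup

section Lift

variable {m : ℕ} [NeZero m] {G : Type*} [Group G]

def lift : {p : G × G // p.1 ^ m = 1 ∧ p.2 ^ 2 = 1 ∧ p.2 * p.1 * p.2 = p.1⁻¹} ≃
    (DihedralGroup m →* G) where
  toFun p :=
    { toFun := fun
        | r i => p.1.1 ^ i.val
        | sr i => p.1.2 * p.1.1 ^ i.val
      map_one' := by simp [one_def, -r_zero]
      map_mul' := by
        obtain ⟨⟨a, b⟩, ha, hb, hbab⟩ := p
        dsimp only at ha hb hbab
        have hbb (x : G) : b * (b * x) = x := by rw [← mul_assoc, ← sq, hb, one_mul]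
        rintro (i | i) (j | j) <;>
          simp only [r_mul_r, r_mul_sr, sr_mul_r, sr_mul_sr, sub_eq_neg_add, ZMod.pow_val_add ha,
            ZMod.pow_val_neg ha, ← mul_pow_mul_eq_inv hb hbab, mul_assoc, hbb] }
  invFun f := ⟨(f (r 1), f (sr 0)), by rw [← map_pow, r_one_pow_n, map_one],
    by rw [← map_pow, sq, sr_mul_self, map_one],
    by rw [← map_mul, ← map_mul, ← map_inv, sr_mul_r, sr_mul_sr, inv_r, zero_add, zero_sub]⟩
  left_inv := by
    rintro ⟨⟨a, b⟩, ha, -, -⟩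
    ext
    · change a ^ (1 : ZMod m).val = a
      rw [ZMod.val_one_eq_one_mod, ← pow_eq_pow_mod 1 ha, pow_one]
    · change b * a ^ (0 : ZMod m).val = b
      rw [ZMod.val_zero, pow_zero, mul_one]
  right_inv f := by
    have hr (i : ZMod m) : f (r 1) ^ i.val = f (r i) := by
      rw [← map_pow, r_one_pow, ZMod.natCast_zmod_val]
    ext (i | i)
    · exact hr i
    · change f (sr 0) * f (r 1) ^ i.val = f (sr i)
      rw [hr, ← map_mul, sr_mul_r, zero_add]

end Lift

variable {m n : ℕ}

lemma sq_eq_one_of_pow_eq_one (hcop : m.Coprime n) {x : DihedralGroup n} (hx : x ^ m = 1) :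
    x ^ 2 = 1 := by
  have hdvd : orderOf x ∣ 2 * n := nat_card (n := n) ▸ orderOf_dvd_natCard x
  exact orderOf_dvd_iff_pow_eq_one.1 <|
    (hcop.coprime_dvd_left (orderOf_dvd_of_pow_eq_one hx)).dvd_of_dvd_mul_right hdvd

lemma pow_eq_one_iff_sq_eq_one (hm : Even m) (hcop : m.Coprime n) {x : DihedralGroup n} :
    x ^ m = 1 ↔ x ^ 2 = 1 := by
  refine ⟨sq_eq_one_of_pow_eq_one hcop, fun hx => ?_⟩
  obtain ⟨k, rfl⟩ := hm.two_dvd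
  rw [pow_mul, hx, one_pow]

lemma sr_sq (i : ZMod n) : sr i ^ 2 = 1 := by rw [sq, sr_mul_self]

lemma r_sq_eq_one_iff (hn : Odd n) {i : ZMod n} : r i ^ 2 = 1 ↔ i = 0 := by
  rw [r_pow, one_def, r.injEq, Nat.cast_two, mul_two, ZMod.add_self_eq_zero_iff_eq_zero hn]

lemma card_commute_sq_eq_one_odd (hn : Odd n) :
    Nat.card {p : DihedralGroup n × DihedralGroup n //
      Commute p.1 p.2 ∧ p.1 ^ 2 = 1 ∧ p.2 ^ 2 = 1} = 3 * n + 1 := by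
  have : NeZero n := ⟨hn.pos.ne'⟩
  rw [← Nat.card_congr (Equiv.subtypeSubtypeEquivSubtypeInter _
      fun p : DihedralGroup n × DihedralGroup n => p.1 ^ 2 = 1 ∧ p.2 ^ 2 = 1),
    ← Nat.card_congr (Equiv.subtypeEquivOfSubtype (oddCommuteEquiv hn).symm)]
  simp only [Nat.card_congr Equiv.subtypeSum, Nat.card_sum]
  simp only [oddCommuteEquiv_symm_apply, r_zero, sr_sq, one_pow, and_self,
    Nat.card_eq_fintype_card, Fintype.card_subtype_true, ZMod.card, r_sq_eq_one_iff hn,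
    ← Prod.mk_eq_zero, Prod.mk.eta, Fintype.card_unique]
  ring

end DihedralGroup

open DihedralGroup in
theorem numHom_even_odd_coprime_general (m n : ℕ) (hm : 0 < m) (hme : Even m) (hno : Odd n)
    (hcop : Nat.gcd m n = 1) :
    Nat.card (DihedralGroup m →* DihedralGroup n) = 3 * n + 1 := by
  have : NeZero m := ⟨hm.ne'⟩
  rw [← Nat.card_congr lift, ← card_commute_sq_eq_one_odd hno]
  refine Nat.card_congr (Equiv.subtypeEquivRight fun p => ?_)
  rw [pow_eq_one_iff_sq_eq_one hme hcop]
  constructor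
  · rintro ⟨ha, hb, hbab⟩
    exact ⟨(mul_mul_eq_inv_iff_commute ha hb).1 hbab, ha, hb⟩
  · rintro ⟨hcomm, ha, hb⟩
    exact ⟨ha, hb, (mul_mul_eq_inv_iff_commute ha hb).2 hcomm⟩

theorem numHom_even_odd_coprime (m n : ℕ) (hm : 0 < m) (hn : 0 < n) (hme : Even m) (hno : Odd n)
    (hcop : Nat.gcd m n = 1) :
    Nat.card (DihedralGroup m →* DihedralGroup n) = 3 * n + 1 :=
  numHom_even_odd_coprime_general m n hm hme hno hcop
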